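/- arXiv:0707.2822 — 6 statements merged into one kernel-verified Lean document; each statement's English description precedes it below -/
import Mathlib

section
/- The complex reflection group G_4, presented as the group generated by s and t subject to the relations s^3 = t^3 = 1 and sts = tst, has exactly 24 elements. -/
/-- Relators for the presentation ⟨s, t ∣ s³ = t³ = 1, sts = tst⟩ of G₄. -/
def G4rels : Set (FreeGroup (Fin 2)) :=
  { (FreeGroup.of 0) ^ 3, (FreeGroup.of 1) ^ 3,
    (FreeGroup.of 0 * FreeGroup.of 1 * FreeGroup.of 0) *
      (FreeGroup.of 1 * FreeGroup.of 0 * FreeGroup.of 1)⁻¹ }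

/-- The complex reflection group G₄ as a presented group. -/
abbrev G4 : Type := PresentedGroup G4rels

namespace G4proof

def S : G4 := PresentedGroup.of 0
def T : G4 := PresentedGroup.of 1

lemma relmk (r : FreeGroup (Fin 2)) (h : r ∈ G4rels) :
    PresentedGroup.mk G4rels r = 1 :=
  (QuotientGroup.eq_one_iff r).mpr (Subgroup.subset_normalClosure h)

lemma hS3 : S * S * S = 1 := by
  have h := relmk ((FreeGroup.of 0) ^ 3) (by simp [G4rels])
  simpa [pow_succ, map_mul, S, PresentedGroup.of] using h

lemma hT3 : T * T * T = 1 := by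
  have h := relmk ((FreeGroup.of 1) ^ 3) (by simp [G4rels])
  simpa [pow_succ, map_mul, T, PresentedGroup.of] using h

lemma hB : T * S * T = S * T * S := by
  have h := relmk _ (show (FreeGroup.of 0 * FreeGroup.of 1 * FreeGroup.of 0) *
      (FreeGroup.of 1 * FreeGroup.of 0 * FreeGroup.of 1)⁻¹ ∈ G4rels by simp [G4rels])
  rw [map_mul, map_inv, mul_inv_eq_one] at h
  simpa [map_mul, S, T, PresentedGroup.of] using h.symm

lemma rS0 : S * (S * S) = 1 := by rw [← mul_assoc]; exact hS3
lemma rS1 (x : G4) : S * (S * (S * x)) = x := by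
  rw [← mul_assoc, ← mul_assoc, hS3, one_mul]
lemma rT0 : T * (T * T) = 1 := by rw [← mul_assoc]; exact hT3
lemma rT1 (x : G4) : T * (T * (T * x)) = x := by
  rw [← mul_assoc, ← mul_assoc, hT3, one_mul]
lemma rB0 : T * (S * T) = S * (T * S) := by
  rw [← mul_assoc, ← mul_assoc]; exact hB
lemma rB1 (x : G4) : T * (S * (T * x)) = S * (T * (S * x)) := by
  rw [← mul_assoc, ← mul_assoc, ← mul_assoc, ← mul_assoc, hB]

lemma r50 : T * (S * (S * (T * T))) = S * (S * (T * (T * S))) := by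
  have h1 : (T * (S * (S * (T * T)))) * T = T * (S * S) := by
    simp only [rS0, rS1, rT0, rT1, rB0, rB1, mul_assoc, one_mul, mul_one]
  have h2 : (S * (S * (T * (T * S)))) * T = T * (S * S) := by
    simp only [rS0, rS1, rT0, rT1, rB0, rB1, mul_assoc, one_mul, mul_one]
  exact mul_right_cancel (h1.trans h2.symm)
lemma r51 (x : G4) : T * (S * (S * (T * (T * x)))) = S * (S * (T * (T * (S * x)))) := by
  have := congrArg (· * x) r50
  simpa [mul_assoc] using this

lemma r60 : T * (T * (S * (S * T))) = S * (T * (T * (S * S))) := by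
  have h1 : (T * (T * (S * (S * T)))) * (S * T) = S := by
    simp only [rS0, rS1, rT0, rT1, rB0, rB1, mul_assoc, one_mul, mul_one]
  have h2 : (S * (T * (T * (S * S)))) * (S * T) = S := by
    simp only [rS0, rS1, rT0, rT1, rB0, rB1, mul_assoc, one_mul, mul_one]
  exact mul_right_cancel (h1.trans h2.symm)
lemma r61 (x : G4) : T * (T * (S * (S * (T * x)))) = S * (T * (T * (S * (S * x)))) := by
  have := congrArg (· * x) r60
  simpa [mul_assoc] using this

lemma r40 : T * (S * (S * (T * S))) = S * (T * (S * (S * T))) := by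
  rw [← rB0, rB1]
lemma r41 (x : G4) : T * (S * (S * (T * (S * x)))) = S * (T * (S * (S * (T * x)))) := by
  have := congrArg (· * x) r40
  simpa [mul_assoc] using this

-- the simp rule set
-- (we inline it in each usage)

def l : List G4 := [1, S, T, S * S, S * T, T * S, T * T, S * (S * T), S * (T * S), S * (T * T), T * (S * S), T * (T * S), S * (S * (T * S)), S * (S * (T * T)), S * (T * (S * S)), S * (T * (T * S)), T * (S * (S * T)), T * (T * (S * S)), S * (S * (T * (S * S))), S * (S * (T * (T * S))), S * (T * (S * (S * T))), S * (T * (T * (S * S))), S * (S * (T * (S * (S * T)))), S * (S * (T * (T * (S * S))))]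

lemma mem0 : (1:G4) ∈ l := by
  simp only [l]
  exact .head _
lemma mem1 : S ∈ l := by
  simp only [l]
  exact .tail _ (.head _)
lemma mem2 : T ∈ l := by
  simp only [l]
  exact .tail _ (.tail _ (.head _))
lemma mem3 : S * S ∈ l := by
  simp only [l]
  exact .tail _ (.tail _ (.tail _ (.head _)))
lemma mem4 : S * T ∈ l := by
  simp only [l]
  exact .tail _ (.tail _ (.tail _ (.tail _ (.head _))))
lemma mem5 : T * S ∈ l := by
  simp only [l]
  exact .tail _ (.tail _ (.tail _ (.tail _ (.tail _ (.head _)))))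
lemma mem6 : T * T ∈ l := by
  simp only [l]
  exact .tail _ (.tail _ (.tail _ (.tail _ (.tail _ (.tail _ (.head _))))))
lemma mem7 : S * (S * T) ∈ l := by
  simp only [l]
  exact .tail _ (.tail _ (.tail _ (.tail _ (.tail _ (.tail _ (.tail _ (.head _)))))))
lemma mem8 : S * (T * S) ∈ l := by
  simp only [l]
  exact .tail _ (.tail _ (.tail _ (.tail _ (.tail _ (.tail _ (.tail _ (.tail _ (.head _))))))))
lemma mem9 : S * (T * T) ∈ l := by
  simp only [l]
  exact .tail _ (.tail _ (.tail _ (.tail _ (.tail _ (.tail _ (.tail _ (.tail _ (.tail _ (.head _)))))))))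
lemma mem10 : T * (S * S) ∈ l := by
  simp only [l]
  exact .tail _ (.tail _ (.tail _ (.tail _ (.tail _ (.tail _ (.tail _ (.tail _ (.tail _ (.tail _ (.head _))))))))))
lemma mem11 : T * (T * S) ∈ l := by
  simp only [l]
  exact .tail _ (.tail _ (.tail _ (.tail _ (.tail _ (.tail _ (.tail _ (.tail _ (.tail _ (.tail _ (.tail _ (.head _)))))))))))
lemma mem12 : S * (S * (T * S)) ∈ l := by
  simp only [l]
  exact .tail _ (.tail _ (.tail _ (.tail _ (.tail _ (.tail _ (.tail _ (.tail _ (.tail _ (.tail _ (.tail _ (.tail _ (.head _))))))))))))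
lemma mem13 : S * (S * (T * T)) ∈ l := by
  simp only [l]
  exact .tail _ (.tail _ (.tail _ (.tail _ (.tail _ (.tail _ (.tail _ (.tail _ (.tail _ (.tail _ (.tail _ (.tail _ (.tail _ (.head _)))))))))))))
lemma mem14 : S * (T * (S * S)) ∈ l := by
  simp only [l]
  exact .tail _ (.tail _ (.tail _ (.tail _ (.tail _ (.tail _ (.tail _ (.tail _ (.tail _ (.tail _ (.tail _ (.tail _ (.tail _ (.tail _ (.head _))))))))))))))
lemma mem15 : S * (T * (T * S)) ∈ l := by
  simp only [l]
  exact .tail _ (.tail _ (.tail _ (.tail _ (.tail _ (.tail _ (.tail _ (.tail _ (.tail _ (.tail _ (.tail _ (.tail _ (.tail _ (.tail _ (.tail _ (.head _)))))))))))))))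
lemma mem16 : T * (S * (S * T)) ∈ l := by
  simp only [l]
  exact .tail _ (.tail _ (.tail _ (.tail _ (.tail _ (.tail _ (.tail _ (.tail _ (.tail _ (.tail _ (.tail _ (.tail _ (.tail _ (.tail _ (.tail _ (.tail _ (.head _))))))))))))))))
lemma mem17 : T * (T * (S * S)) ∈ l := by
  simp only [l]
  exact .tail _ (.tail _ (.tail _ (.tail _ (.tail _ (.tail _ (.tail _ (.tail _ (.tail _ (.tail _ (.tail _ (.tail _ (.tail _ (.tail _ (.tail _ (.tail _ (.tail _ (.head _)))))))))))))))))
lemma mem18 : S * (S * (T * (S * S))) ∈ l := by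
  simp only [l]
  exact .tail _ (.tail _ (.tail _ (.tail _ (.tail _ (.tail _ (.tail _ (.tail _ (.tail _ (.tail _ (.tail _ (.tail _ (.tail _ (.tail _ (.tail _ (.tail _ (.tail _ (.tail _ (.head _))))))))))))))))))
lemma mem19 : S * (S * (T * (T * S))) ∈ l := by
  simp only [l]
  exact .tail _ (.tail _ (.tail _ (.tail _ (.tail _ (.tail _ (.tail _ (.tail _ (.tail _ (.tail _ (.tail _ (.tail _ (.tail _ (.tail _ (.tail _ (.tail _ (.tail _ (.tail _ (.tail _ (.head _)))))))))))))))))))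
lemma mem20 : S * (T * (S * (S * T))) ∈ l := by
  simp only [l]
  exact .tail _ (.tail _ (.tail _ (.tail _ (.tail _ (.tail _ (.tail _ (.tail _ (.tail _ (.tail _ (.tail _ (.tail _ (.tail _ (.tail _ (.tail _ (.tail _ (.tail _ (.tail _ (.tail _ (.tail _ (.head _))))))))))))))))))))
lemma mem21 : S * (T * (T * (S * S))) ∈ l := by
  simp only [l]
  exact .tail _ (.tail _ (.tail _ (.tail _ (.tail _ (.tail _ (.tail _ (.tail _ (.tail _ (.tail _ (.tail _ (.tail _ (.tail _ (.tail _ (.tail _ (.tail _ (.tail _ (.tail _ (.tail _ (.tail _ (.tail _ (.head _)))))))))))))))))))))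
lemma mem22 : S * (S * (T * (S * (S * T)))) ∈ l := by
  simp only [l]
  exact .tail _ (.tail _ (.tail _ (.tail _ (.tail _ (.tail _ (.tail _ (.tail _ (.tail _ (.tail _ (.tail _ (.tail _ (.tail _ (.tail _ (.tail _ (.tail _ (.tail _ (.tail _ (.tail _ (.tail _ (.tail _ (.tail _ (.head _))))))))))))))))))))))
lemma mem23 : S * (S * (T * (T * (S * S)))) ∈ l := by
  simp only [l]
  exact .tail _ (.tail _ (.tail _ (.tail _ (.tail _ (.tail _ (.tail _ (.tail _ (.tail _ (.tail _ (.tail _ (.tail _ (.tail _ (.tail _ (.tail _ (.tail _ (.tail _ (.tail _ (.tail _ (.tail _ (.tail _ (.tail _ (.tail _ (.head _)))))))))))))))))))))))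

set_option maxHeartbeats 1000000 in
lemma memS : ∀ x ∈ l, x * S ∈ l := by
  intro x hx
  simp only [l, List.mem_cons, List.not_mem_nil, or_false] at hx
  rcases hx with rfl|rfl|rfl|rfl|rfl|rfl|rfl|rfl|rfl|rfl|rfl|rfl|rfl|rfl|rfl|rfl|rfl|rfl|rfl|rfl|rfl|rfl|rfl|rfl
  · have e : (1:G4) * S = S := by simp only [rS0, rS1, rT0, rT1, rB0, rB1, r40, r41, r50, r51, r60, r61, mul_assoc, one_mul, mul_one]
    rw [e]; exact mem1
  · have e : S * S = S * S := by simp only [rS0, rS1, rT0, rT1, rB0, rB1, r40, r41, r50, r51, r60, r61, mul_assoc, one_mul, mul_one]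
    rw [e]; exact mem3
  · have e : T * S = T * S := by simp only [rS0, rS1, rT0, rT1, rB0, rB1, r40, r41, r50, r51, r60, r61, mul_assoc, one_mul, mul_one]
    rw [e]; exact mem5
  · have e : S * S * S = 1 := by simp only [rS0, rS1, rT0, rT1, rB0, rB1, r40, r41, r50, r51, r60, r61, mul_assoc, one_mul, mul_one]
    rw [e]; exact mem0
  · have e : S * T * S = S * (T * S) := by simp only [rS0, rS1, rT0, rT1, rB0, rB1, r40, r41, r50, r51, r60, r61, mul_assoc, one_mul, mul_one]
    rw [e]; exact mem8
  · have e : T * S * S = T * (S * S) := by simp only [rS0, rS1, rT0, rT1, rB0, rB1, r40, r41, r50, r51, r60, r61, mul_assoc, one_mul, mul_one]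
    rw [e]; exact mem10
  · have e : T * T * S = T * (T * S) := by simp only [rS0, rS1, rT0, rT1, rB0, rB1, r40, r41, r50, r51, r60, r61, mul_assoc, one_mul, mul_one]
    rw [e]; exact mem11
  · have e : S * (S * T) * S = S * (S * (T * S)) := by simp only [rS0, rS1, rT0, rT1, rB0, rB1, r40, r41, r50, r51, r60, r61, mul_assoc, one_mul, mul_one]
    rw [e]; exact mem12
  · have e : S * (T * S) * S = S * (T * (S * S)) := by simp only [rS0, rS1, rT0, rT1, rB0, rB1, r40, r41, r50, r51, r60, r61, mul_assoc, one_mul, mul_one]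
    rw [e]; exact mem14
  · have e : S * (T * T) * S = S * (T * (T * S)) := by simp only [rS0, rS1, rT0, rT1, rB0, rB1, r40, r41, r50, r51, r60, r61, mul_assoc, one_mul, mul_one]
    rw [e]; exact mem15
  · have e : T * (S * S) * S = T := by simp only [rS0, rS1, rT0, rT1, rB0, rB1, r40, r41, r50, r51, r60, r61, mul_assoc, one_mul, mul_one]
    rw [e]; exact mem2
  · have e : T * (T * S) * S = T * (T * (S * S)) := by simp only [rS0, rS1, rT0, rT1, rB0, rB1, r40, r41, r50, r51, r60, r61, mul_assoc, one_mul, mul_one]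
    rw [e]; exact mem17
  · have e : S * (S * (T * S)) * S = S * (S * (T * (S * S))) := by simp only [rS0, rS1, rT0, rT1, rB0, rB1, r40, r41, r50, r51, r60, r61, mul_assoc, one_mul, mul_one]
    rw [e]; exact mem18
  · have e : S * (S * (T * T)) * S = S * (S * (T * (T * S))) := by simp only [rS0, rS1, rT0, rT1, rB0, rB1, r40, r41, r50, r51, r60, r61, mul_assoc, one_mul, mul_one]
    rw [e]; exact mem19
  · have e : S * (T * (S * S)) * S = S * T := by simp only [rS0, rS1, rT0, rT1, rB0, rB1, r40, r41, r50, r51, r60, r61, mul_assoc, one_mul, mul_one]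
    rw [e]; exact mem4
  · have e : S * (T * (T * S)) * S = S * (T * (T * (S * S))) := by simp only [rS0, rS1, rT0, rT1, rB0, rB1, r40, r41, r50, r51, r60, r61, mul_assoc, one_mul, mul_one]
    rw [e]; exact mem21
  · have e : T * (S * (S * T)) * S = S * (T * (S * (S * T))) := by simp only [rS0, rS1, rT0, rT1, rB0, rB1, r40, r41, r50, r51, r60, r61, mul_assoc, one_mul, mul_one]
    rw [e]; exact mem20
  · have e : T * (T * (S * S)) * S = T * T := by simp only [rS0, rS1, rT0, rT1, rB0, rB1, r40, r41, r50, r51, r60, r61, mul_assoc, one_mul, mul_one]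
    rw [e]; exact mem6
  · have e : S * (S * (T * (S * S))) * S = S * (S * T) := by simp only [rS0, rS1, rT0, rT1, rB0, rB1, r40, r41, r50, r51, r60, r61, mul_assoc, one_mul, mul_one]
    rw [e]; exact mem7
  · have e : S * (S * (T * (T * S))) * S = S * (S * (T * (T * (S * S)))) := by simp only [rS0, rS1, rT0, rT1, rB0, rB1, r40, r41, r50, r51, r60, r61, mul_assoc, one_mul, mul_one]
    rw [e]; exact mem23
  · have e : S * (T * (S * (S * T))) * S = S * (S * (T * (S * (S * T)))) := by simp only [rS0, rS1, rT0, rT1, rB0, rB1, r40, r41, r50, r51, r60, r61, mul_assoc, one_mul, mul_one]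
    rw [e]; exact mem22
  · have e : S * (T * (T * (S * S))) * S = S * (T * T) := by simp only [rS0, rS1, rT0, rT1, rB0, rB1, r40, r41, r50, r51, r60, r61, mul_assoc, one_mul, mul_one]
    rw [e]; exact mem9
  · have e : S * (S * (T * (S * (S * T)))) * S = T * (S * (S * T)) := by simp only [rS0, rS1, rT0, rT1, rB0, rB1, r40, r41, r50, r51, r60, r61, mul_assoc, one_mul, mul_one]
    rw [e]; exact mem16
  · have e : S * (S * (T * (T * (S * S)))) * S = S * (S * (T * T)) := by simp only [rS0, rS1, rT0, rT1, rB0, rB1, r40, r41, r50, r51, r60, r61, mul_assoc, one_mul, mul_one]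
    rw [e]; exact mem13

set_option maxHeartbeats 1000000 in
lemma memT : ∀ x ∈ l, x * T ∈ l := by
  intro x hx
  simp only [l, List.mem_cons, List.not_mem_nil, or_false] at hx
  rcases hx with rfl|rfl|rfl|rfl|rfl|rfl|rfl|rfl|rfl|rfl|rfl|rfl|rfl|rfl|rfl|rfl|rfl|rfl|rfl|rfl|rfl|rfl|rfl|rfl
  · have e : (1:G4) * T = T := by simp only [rS0, rS1, rT0, rT1, rB0, rB1, r40, r41, r50, r51, r60, r61, mul_assoc, one_mul, mul_one]
    rw [e]; exact mem2
  · have e : S * T = S * T := by simp only [rS0, rS1, rT0, rT1, rB0, rB1, r40, r41, r50, r51, r60, r61, mul_assoc, one_mul, mul_one]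
    rw [e]; exact mem4
  · have e : T * T = T * T := by simp only [rS0, rS1, rT0, rT1, rB0, rB1, r40, r41, r50, r51, r60, r61, mul_assoc, one_mul, mul_one]
    rw [e]; exact mem6
  · have e : S * S * T = S * (S * T) := by simp only [rS0, rS1, rT0, rT1, rB0, rB1, r40, r41, r50, r51, r60, r61, mul_assoc, one_mul, mul_one]
    rw [e]; exact mem7
  · have e : S * T * T = S * (T * T) := by simp only [rS0, rS1, rT0, rT1, rB0, rB1, r40, r41, r50, r51, r60, r61, mul_assoc, one_mul, mul_one]
    rw [e]; exact mem9
  · have e : T * S * T = S * (T * S) := by simp only [rS0, rS1, rT0, rT1, rB0, rB1, r40, r41, r50, r51, r60, r61, mul_assoc, one_mul, mul_one]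
    rw [e]; exact mem8
  · have e : T * T * T = 1 := by simp only [rS0, rS1, rT0, rT1, rB0, rB1, r40, r41, r50, r51, r60, r61, mul_assoc, one_mul, mul_one]
    rw [e]; exact mem0
  · have e : S * (S * T) * T = S * (S * (T * T)) := by simp only [rS0, rS1, rT0, rT1, rB0, rB1, r40, r41, r50, r51, r60, r61, mul_assoc, one_mul, mul_one]
    rw [e]; exact mem13
  · have e : S * (T * S) * T = S * (S * (T * S)) := by simp only [rS0, rS1, rT0, rT1, rB0, rB1, r40, r41, r50, r51, r60, r61, mul_assoc, one_mul, mul_one]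
    rw [e]; exact mem12
  · have e : S * (T * T) * T = S := by simp only [rS0, rS1, rT0, rT1, rB0, rB1, r40, r41, r50, r51, r60, r61, mul_assoc, one_mul, mul_one]
    rw [e]; exact mem1
  · have e : T * (S * S) * T = T * (S * (S * T)) := by simp only [rS0, rS1, rT0, rT1, rB0, rB1, r40, r41, r50, r51, r60, r61, mul_assoc, one_mul, mul_one]
    rw [e]; exact mem16
  · have e : T * (T * S) * T = S * (T * (S * S)) := by simp only [rS0, rS1, rT0, rT1, rB0, rB1, r40, r41, r50, r51, r60, r61, mul_assoc, one_mul, mul_one]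
    rw [e]; exact mem14
  · have e : S * (S * (T * S)) * T = T * S := by simp only [rS0, rS1, rT0, rT1, rB0, rB1, r40, r41, r50, r51, r60, r61, mul_assoc, one_mul, mul_one]
    rw [e]; exact mem5
  · have e : S * (S * (T * T)) * T = S * S := by simp only [rS0, rS1, rT0, rT1, rB0, rB1, r40, r41, r50, r51, r60, r61, mul_assoc, one_mul, mul_one]
    rw [e]; exact mem3
  · have e : S * (T * (S * S)) * T = S * (T * (S * (S * T))) := by simp only [rS0, rS1, rT0, rT1, rB0, rB1, r40, r41, r50, r51, r60, r61, mul_assoc, one_mul, mul_one]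
    rw [e]; exact mem20
  · have e : S * (T * (T * S)) * T = S * (S * (T * (S * S))) := by simp only [rS0, rS1, rT0, rT1, rB0, rB1, r40, r41, r50, r51, r60, r61, mul_assoc, one_mul, mul_one]
    rw [e]; exact mem18
  · have e : T * (S * (S * T)) * T = S * (S * (T * (T * S))) := by simp only [rS0, rS1, rT0, rT1, rB0, rB1, r40, r41, r50, r51, r60, r61, mul_assoc, one_mul, mul_one]
    rw [e]; exact mem19
  · have e : T * (T * (S * S)) * T = S * (T * (T * (S * S))) := by simp only [rS0, rS1, rT0, rT1, rB0, rB1, r40, r41, r50, r51, r60, r61, mul_assoc, one_mul, mul_one]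
    rw [e]; exact mem21
  · have e : S * (S * (T * (S * S))) * T = S * (S * (T * (S * (S * T)))) := by simp only [rS0, rS1, rT0, rT1, rB0, rB1, r40, r41, r50, r51, r60, r61, mul_assoc, one_mul, mul_one]
    rw [e]; exact mem22
  · have e : S * (S * (T * (T * S))) * T = T * (S * S) := by simp only [rS0, rS1, rT0, rT1, rB0, rB1, r40, r41, r50, r51, r60, r61, mul_assoc, one_mul, mul_one]
    rw [e]; exact mem10
  · have e : S * (T * (S * (S * T))) * T = T * (T * S) := by simp only [rS0, rS1, rT0, rT1, rB0, rB1, r40, r41, r50, r51, r60, r61, mul_assoc, one_mul, mul_one]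
    rw [e]; exact mem11
  · have e : S * (T * (T * (S * S))) * T = S * (S * (T * (T * (S * S)))) := by simp only [rS0, rS1, rT0, rT1, rB0, rB1, r40, r41, r50, r51, r60, r61, mul_assoc, one_mul, mul_one]
    rw [e]; exact mem23
  · have e : S * (S * (T * (S * (S * T)))) * T = S * (T * (T * S)) := by simp only [rS0, rS1, rT0, rT1, rB0, rB1, r40, r41, r50, r51, r60, r61, mul_assoc, one_mul, mul_one]
    rw [e]; exact mem15
  · have e : S * (S * (T * (T * (S * S)))) * T = T * (T * (S * S)) := by simp only [rS0, rS1, rT0, rT1, rB0, rB1, r40, r41, r50, r51, r60, r61, mul_assoc, one_mul, mul_one]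
    rw [e]; exact mem17

lemma hSinv : S⁻¹ = S * S := inv_eq_of_mul_eq_one_right rS0
lemma hTinv : T⁻¹ = T * T := inv_eq_of_mul_eq_one_right rT0

lemma one_mem_l : (1 : G4) ∈ l := mem0

lemma mem_l : ∀ x : G4, x ∈ l := by
  have key : ∀ (w : FreeGroup (Fin 2)), ∀ x ∈ l, x * PresentedGroup.mk G4rels w ∈ l := by
    intro w
    induction w using FreeGroup.induction_on with
    | C1 => intro x hx; simpa using hx
    | of i =>
      intro x hx
      obtain rfl | rfl : i = 0 ∨ i = 1 := by omega
      · exact memS x hx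
      · exact memT x hx
    | inv_of i _ =>
      intro x hx
      obtain rfl | rfl : i = 0 ∨ i = 1 := by omega
      · show x * S⁻¹ ∈ l
        rw [hSinv, ← mul_assoc]
        exact memS _ (memS x hx)
      · show x * T⁻¹ ∈ l
        rw [hTinv, ← mul_assoc]
        exact memT _ (memT x hx)
    | mul a b ha hb =>
      intro x hx
      rw [map_mul, ← mul_assoc]
      exact hb _ (ha x hx)
  intro x
  refine PresentedGroup.induction_on x fun w => ?_
  simpa using key w 1 one_mem_l

-- the matrix model
abbrev M := Matrix.SpecialLinearGroup (Fin 2) (ZMod 3)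

instance : DecidableEq M := fun a b => decidable_of_iff (a.1 = b.1) Subtype.ext_iff.symm

def Ms : M := ⟨!![1, 1; 0, 1], by decide⟩
def Mt : M := ⟨!![1, 0; 2, 1], by decide⟩

def mgen : Fin 2 → M := ![Ms, Mt]

lemma relsat : ∀ r ∈ G4rels, FreeGroup.lift mgen r = 1 := by
  intro r hr
  simp only [G4rels, Set.mem_insert_iff, Set.mem_singleton_iff] at hr
  rcases hr with rfl | rfl | rfl
  · simp only [map_pow, FreeGroup.lift_apply_of]
    decide
  · simp only [map_pow, FreeGroup.lift_apply_of]
    decide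
  · simp only [map_mul, map_inv, FreeGroup.lift_apply_of]
    decide

def phi : G4 →* M := PresentedGroup.toGroup relsat

lemma phiS : phi S = Ms := PresentedGroup.toGroup.of relsat
lemma phiT : phi T = Mt := PresentedGroup.toGroup.of relsat

lemma nodup_map : (l.map phi).Nodup := by
  simp only [l, List.map_cons, List.map_nil, map_mul, map_one, phiS, phiT]
  decide

lemma nodup_l : l.Nodup := nodup_map.of_map phi

lemma len_l : l.length = 24 := rfl

def F : Fin 24 → G4 := fun i => l.get (Fin.cast len_l.symm i)

lemma F_inj : Function.Injective F := by
  intro i j h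
  have h2 := List.nodup_iff_injective_get.mp nodup_l
    (show l.get (Fin.cast len_l.symm i) = l.get (Fin.cast len_l.symm j) from h)
  simpa [Fin.ext_iff] using h2

lemma F_surj : Function.Surjective F := by
  intro x
  obtain ⟨i, hi⟩ := List.mem_iff_get.mp (mem_l x)
  exact ⟨Fin.cast len_l i, hi⟩

end G4proof

open G4proof in
theorem card_G4 : Nat.card G4 = 24 := by
  have h := Nat.card_eq_of_bijective F ⟨F_inj, F_surj⟩
  simpa using h.symm
end

section
/- In the group G_4 = ⟨s, t ∣ s³ = t³ = 1, sts = tst⟩, the centralizer of the generator s is exactly the set {1, s, s², ts²t, t²st², tststs}. -/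
def s : G4 := PresentedGroup.of 0
def t : G4 := PresentedGroup.of 1

lemma rel_mk {r : FreeGroup (Fin 2)} (hr : r ∈ G4rels) :
    PresentedGroup.mk G4rels r = 1 :=
  (QuotientGroup.eq_one_iff _).mpr (Subgroup.subset_normalClosure hr)

lemma hs3 : s * s * s = 1 := by
  have h := rel_mk (show (FreeGroup.of 0) ^ 3 ∈ G4rels by simp [G4rels])
  rw [map_pow] at h
  rw [show s * s * s = s ^ 3 from (pow_three s).symm]
  exact h

lemma ht3 : t * t * t = 1 := by
  have h := rel_mk (show (FreeGroup.of 1) ^ 3 ∈ G4rels by simp [G4rels])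
  rw [map_pow] at h
  rw [show t * t * t = t ^ 3 from (pow_three t).symm]
  exact h

lemma hsts : s * t * s = t * s * t := by
  have h := rel_mk (show (FreeGroup.of 0 * FreeGroup.of 1 * FreeGroup.of 0) *
      (FreeGroup.of 1 * FreeGroup.of 0 * FreeGroup.of 1)⁻¹ ∈ G4rels by simp [G4rels])
  rw [map_mul, map_inv, map_mul, map_mul, map_mul, map_mul, mul_inv_eq_one] at h
  exact h

lemma r1 (x : G4) : s * (s * (s * x)) = x := by
  rw [← mul_assoc, ← mul_assoc, hs3, one_mul]

lemma r1a : s * (s * s) = 1 := by rw [← mul_assoc, hs3]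

lemma r2 (x : G4) : t * (t * (t * x)) = x := by
  rw [← mul_assoc, ← mul_assoc, ht3, one_mul]

lemma r2a : t * (t * t) = 1 := by rw [← mul_assoc, ht3]

lemma r3 (x : G4) : t * (s * (t * x)) = s * (t * (s * x)) := by
  rw [← mul_assoc, ← mul_assoc, ← hsts, mul_assoc, mul_assoc]

lemma r3a : t * (s * t) = s * (t * s) := by
  rw [← mul_assoc, ← hsts, mul_assoc]

lemma r4 (x : G4) : t * (s * (s * (t * (s * x)))) = s * (t * (s * (s * (t * x)))) := by
  have key : t * (s * (s * (t * (s * x)))) * (s * (t * (s * (s * (t * x)))))⁻¹ =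
      (t * s) * ((s * t * s) * (t * s * t)⁻¹) * (t * s)⁻¹ * ((t * s * t) * (s * t * s)⁻¹) := by
    group
  rw [hsts] at key
  simp only [mul_inv_cancel, mul_one, one_mul] at key
  exact mul_inv_eq_one.mp key

lemma r4a : t * (s * (s * (t * s))) = s * (t * (s * (s * t))) := by
  simpa using r4 1

lemma r5 (x : G4) : t * (s * (s * (t * (t * x)))) = s * (s * (t * (t * (s * x)))) := by
  have key : t * (s * (s * (t * (t * x)))) * (s * (s * (t * (t * (s * x)))))⁻¹ =
      (s * s * s)⁻¹ * ((s * s) * ((s * t * s) * (t * s * t)⁻¹) * (s * s)⁻¹) *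
        ((s * s * t) * ((s * t * s) * (t * s * t)⁻¹) * (s * s * t)⁻¹) *
        ((s * s * t * t * s) * (t * t * t) * (s * s * t * t * s)⁻¹) := by
    group
  rw [hsts, hs3, ht3] at key
  simp only [mul_inv_cancel, mul_one, one_mul, inv_one] at key
  exact mul_inv_eq_one.mp key

lemma r5a : t * (s * (s * (t * t))) = s * (s * (t * (t * s))) := by
  simpa using r5 1

lemma r6 (x : G4) : t * (t * (s * (s * (t * x)))) = s * (t * (t * (s * (s * x)))) := by
  have key : t * (t * (s * (s * (t * x)))) * (s * (t * (t * (s * (s * x)))))⁻¹ =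
      ((t * t * s * s * t) * (s * s * s)⁻¹ * (t * t * s * s * t)⁻¹) *
        ((t * t * s) * ((s * t * s) * (t * s * t)⁻¹) * (t * t * s)⁻¹) *
        ((t * t) * ((s * t * s) * (t * s * t)⁻¹) * (t * t)⁻¹) * (t * t * t) := by
    group
  rw [hsts, hs3, ht3] at key
  simp only [mul_inv_cancel, mul_one, one_mul, inv_one] at key
  exact mul_inv_eq_one.mp key

lemma r6a : t * (t * (s * (s * t))) = s * (t * (t * (s * s))) := by
  simpa using r6 1

lemma sinv : s⁻¹ = s * s := inv_eq_of_mul_eq_one_right r1a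

lemma sinv' (x : G4) : s⁻¹ * x = s * (s * x) := by rw [sinv, mul_assoc]

lemma tinv : t⁻¹ = t * t := inv_eq_of_mul_eq_one_right r2a

lemma tinv' (x : G4) : t⁻¹ * x = t * (t * x) := by rw [tinv, mul_assoc]

def sig : Equiv.Perm (Fin 4) := Equiv.swap 1 2 * Equiv.swap 2 3
def tau : Equiv.Perm (Fin 4) := Equiv.swap 0 1 * Equiv.swap 1 3

lemma hrels : ∀ r ∈ G4rels, FreeGroup.lift (![sig, tau]) r = 1 := by
  intro r hr
  simp only [G4rels, Set.mem_insert_iff, Set.mem_singleton_iff] at hr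
  rcases hr with rfl | rfl | rfl <;>
    simp only [map_mul, map_pow, map_inv, FreeGroup.lift_apply_of,
      Matrix.cons_val_zero, Matrix.cons_val_one, Matrix.head_cons] <;>
    decide

def phi : G4 →* Equiv.Perm (Fin 4) := PresentedGroup.toGroup hrels

lemma phis : phi s = sig := by
  show PresentedGroup.toGroup hrels (PresentedGroup.of 0) = sig
  rw [PresentedGroup.toGroup.of]
  rfl

lemma phit : phi t = tau := by
  show PresentedGroup.toGroup hrels (PresentedGroup.of 1) = tau
  rw [PresentedGroup.toGroup.of]
  rfl

set_option maxHeartbeats 4000000 in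
lemma enum (g : G4) : g = 1 ∨ g = s ∨ g = t ∨ g = s * (s) ∨ g = s * (t) ∨ g = t * (s) ∨ g = t * (t) ∨ g = s * (s * (t)) ∨ g = s * (t * (s)) ∨ g = s * (t * (t)) ∨ g = t * (s * (s)) ∨ g = t * (t * (s)) ∨ g = s * (s * (t * (s))) ∨ g = s * (s * (t * (t))) ∨ g = s * (t * (s * (s))) ∨ g = s * (t * (t * (s))) ∨ g = t * (s * (s * (t))) ∨ g = t * (t * (s * (s))) ∨ g = s * (s * (t * (s * (s)))) ∨ g = s * (s * (t * (t * (s)))) ∨ g = s * (t * (s * (s * (t)))) ∨ g = s * (t * (t * (s * (s)))) ∨ g = s * (s * (t * (s * (s * (t))))) ∨ g = s * (s * (t * (t * (s * (s))))) := by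
  have hg : g ∈ Subgroup.closure ({s, t} : Set G4) := by
    have h2 : (Set.range (PresentedGroup.of : Fin 2 → G4)) = {s, t} := by
      ext x
      constructor
      · rintro ⟨i, rfl⟩
        fin_cases i
        · exact Set.mem_insert _ _
        · exact Set.mem_insert_of_mem _ rfl
      · intro hx
        rw [Set.mem_insert_iff, Set.mem_singleton_iff] at hx
        rcases hx with rfl | rfl
        exacts [⟨0, rfl⟩, ⟨1, rfl⟩]
    rw [← h2, PresentedGroup.closure_range_of]
    trivial
  induction hg using Subgroup.closure_induction_left with
  | one => exact Or.inl rfl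
  | mul_left x hx y hy ih =>
    rw [Set.mem_insert_iff, Set.mem_singleton_iff] at hx
    rcases hx with rfl | rfl <;> rcases ih with rfl|rfl|rfl|rfl|rfl|rfl|rfl|rfl|rfl|rfl|rfl|rfl|rfl|rfl|rfl|rfl|rfl|rfl|rfl|rfl|rfl|rfl|rfl|rfl <;>
      simp only [r1, r1a, r2, r2a, r3, r3a, r4, r4a, r5, r5a, r6, r6a, sinv, tinv, sinv', tinv', mul_assoc, mul_one, one_mul, eq_self_iff_true, or_true, true_or]
  | inv_mul_cancel x hx y hy ih =>
    rw [Set.mem_insert_iff, Set.mem_singleton_iff] at hx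
    rcases hx with rfl | rfl <;> rcases ih with rfl|rfl|rfl|rfl|rfl|rfl|rfl|rfl|rfl|rfl|rfl|rfl|rfl|rfl|rfl|rfl|rfl|rfl|rfl|rfl|rfl|rfl|rfl|rfl <;>
      simp only [r1, r1a, r2, r2a, r3, r3a, r4, r4a, r5, r5a, r6, r6a, sinv, tinv, sinv', tinv', mul_assoc, mul_one, one_mul, eq_self_iff_true, or_true, true_or]

set_option maxHeartbeats 4000000 in
/-- The centralizer of the generator s in G₄ is {1, s, s², ts²t, t²st², tststs}. -/
theorem centralizer_s_G4 :
    {g : G4 | g * s = s * g} =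
      ({1, s, s ^ 2, t * s ^ 2 * t, t ^ 2 * s * t ^ 2,
        t * s * t * s * t * s} : Set G4) := by
  ext g
  simp only [Set.mem_setOf_eq, Set.mem_insert_iff, Set.mem_singleton_iff]
  constructor
  · intro h
    rcases enum g with rfl|rfl|rfl|rfl|rfl|rfl|rfl|rfl|rfl|rfl|rfl|rfl|rfl|rfl|rfl|rfl|rfl|rfl|rfl|rfl|rfl|rfl|rfl|rfl <;>
      first
      | (simp only [sq, mul_assoc, r1, r1a, r2, r2a, r3, r3a, r4, r4a, r5, r5a, r6, r6a, sinv, tinv, sinv', tinv', mul_assoc, mul_one, one_mul, eq_self_iff_true, or_true, true_or]; done)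
      | (exact absurd (congrArg phi h)
          (by simp only [map_mul, phis, phit]; decide))
  · intro h
    rcases h with rfl | rfl | rfl | rfl | rfl | rfl <;>
      simp only [sq, mul_assoc, r1, r1a, r2, r2a, r3, r3a, r4, r4a, r5, r5a, r6, r6a, sinv, tinv, sinv', tinv', mul_assoc, mul_one, one_mul, eq_self_iff_true, or_true, true_or]
end

section
/- The group G_4 = ⟨s, t ∣ s³ = t³ = 1, sts = tst⟩ has exactly 12 orbits under the conjugation action of the cyclic subgroup ⟨s⟩ (i.e., exactly 12 s-conjugacy classes). -/
set_option maxHeartbeats 1000000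

/-- The s-conjugacy class of g: the orbit of g under conjugation by powers of s. -/
def sConjClass (g : G4) : Set G4 :=
  {h : G4 | ∃ n : ℤ, h = s ^ n * g * s ^ (-n)}

namespace G4Aux

lemma rel_one {r : FreeGroup (Fin 2)} (h : r ∈ G4rels) : PresentedGroup.mk G4rels r = 1 :=
  (QuotientGroup.eq_one_iff r).2 (Subgroup.subset_normalClosure h)

lemma hs0 : PresentedGroup.mk G4rels (FreeGroup.of 0) = s := rfl
lemma ht0 : PresentedGroup.mk G4rels (FreeGroup.of 1) = t := rfl

lemma relS : s ^ 3 = 1 := by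
  have h := rel_one (Set.mem_insert _ _)
  rwa [map_pow, hs0] at h

lemma relT : t ^ 3 = 1 := by
  have h := rel_one (Set.mem_insert_of_mem _ (Set.mem_insert _ _))
  rwa [map_pow, ht0] at h

lemma relB : s * t * s = t * s * t := by
  have h := rel_one (r := (FreeGroup.of 0 * FreeGroup.of 1 * FreeGroup.of 0) *
      (FreeGroup.of 1 * FreeGroup.of 0 * FreeGroup.of 1)⁻¹)
    (Set.mem_insert_of_mem _ (Set.mem_insert_of_mem _ rfl))
  rw [map_mul, map_inv, map_mul, map_mul, map_mul, map_mul, hs0, ht0] at h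
  exact mul_inv_eq_one.mp h

lemma sss : s * s * s = 1 := by
  have h := relS; rwa [pow_succ, pow_succ, pow_one] at h
lemma ttt : t * t * t = 1 := by
  have h := relT; rwa [pow_succ, pow_succ, pow_one] at h

lemma R1 (x : G4) : s * (s * (s * x)) = x := by
  rw [← mul_assoc, ← mul_assoc, sss, one_mul]
lemma R2 (x : G4) : t * (t * (t * x)) = x := by
  rw [← mul_assoc, ← mul_assoc, ttt, one_mul]
lemma R1' : s * (s * s) = 1 := by have := R1 1; rwa [mul_one] at this
lemma R2' : t * (t * t) = 1 := by have := R2 1; rwa [mul_one] at this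
lemma R3 (x : G4) : t * (s * (t * x)) = s * (t * (s * x)) := by
  rw [← mul_assoc, ← mul_assoc, ← relB, mul_assoc, mul_assoc]
lemma R3' : t * (s * t) = s * (t * s) := by
  have := R3 1; rwa [mul_one, mul_one] at this

lemma R4 (x : G4) : t * (s * (s * (t * (s * x)))) = s * (t * (s * (s * (t * x)))) := by
  conv_lhs => rw [← R3 x]
  exact R3 (s * (t * x))
lemma R4' : t * (s * (s * (t * s))) = s * (t * (s * (s * t))) := by
  have := R4 1; rwa [mul_one, mul_one] at this

lemma R5 (x : G4) : t * (t * (s * (s * (t * x)))) = s * (t * (t * (s * (s * x)))) := by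
  conv_lhs => rw [← R1 x, ← R3 (s * (s * x)), ← R3 (t * (s * (s * x)))]
  exact R2 _
lemma R5' : t * (t * (s * (s * t))) = s * (t * (t * (s * s))) := by
  have := R5 1; rwa [mul_one, mul_one] at this

lemma R6 (x : G4) : t * (s * (s * (t * (t * x)))) = s * (s * (t * (t * (s * x)))) := by
  conv_lhs => rw [← R1 (t * (s * (s * (t * (t * x))))), ← R3 (s * (t * (t * x))),
    ← R3 (t * (t * x))]
  rw [R2 x]
lemma R6' : t * (s * (s * (t * t))) = s * (s * (t * (t * s))) := by
  have := R6 1; rwa [mul_one, mul_one] at this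

lemma sinv : s⁻¹ = s * s := inv_eq_of_mul_eq_one_left (by rw [mul_assoc]; exact R1')
lemma tinv : t⁻¹ = t * t := inv_eq_of_mul_eq_one_left (by rw [mul_assoc]; exact R2')

def A : Set G4 := {(1 : G4), s, t, s * (s), s * (t), t * (s), t * (t), s * (s * (t)), s * (t * (s)), s * (t * (t)), t * (s * (s)), t * (t * (s)), s * (s * (t * (s))), s * (s * (t * (t))), s * (t * (s * (s))), s * (t * (t * (s))), t * (s * (s * (t))), t * (t * (s * (s))), s * (s * (t * (s * (s)))), s * (s * (t * (t * (s)))), s * (t * (s * (s * (t)))), s * (t * (t * (s * (s)))), s * (s * (t * (s * (s * (t))))), s * (s * (t * (t * (s * (s)))))}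


lemma memA_s : ∀ a ∈ A, s * a ∈ A := by
  intro a ha
  simp only [A, Set.mem_insert_iff, Set.mem_singleton_iff] at ha
  rcases ha with rfl|rfl|rfl|rfl|rfl|rfl|rfl|rfl|rfl|rfl|rfl|rfl|rfl|rfl|rfl|rfl|rfl|rfl|rfl|rfl|rfl|rfl|rfl|rfl <;>
    · try simp only [R1, R1', R2, R2', R3, R3', R4, R4', R5, R5', R6, R6', mul_assoc]
      simp only [A, Set.mem_insert_iff, Set.mem_singleton_iff]
      tauto

lemma memA_t : ∀ a ∈ A, t * a ∈ A := by
  intro a ha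
  simp only [A, Set.mem_insert_iff, Set.mem_singleton_iff] at ha
  rcases ha with rfl|rfl|rfl|rfl|rfl|rfl|rfl|rfl|rfl|rfl|rfl|rfl|rfl|rfl|rfl|rfl|rfl|rfl|rfl|rfl|rfl|rfl|rfl|rfl <;>
    · try simp only [R1, R1', R2, R2', R3, R3', R4, R4', R5, R5', R6, R6', mul_assoc]
      simp only [A, Set.mem_insert_iff, Set.mem_singleton_iff]
      tauto

lemma cover : ∀ g : G4, g ∈ A := by
  intro g
  have hg : g ∈ Subgroup.closure (Set.range (PresentedGroup.of : Fin 2 → G4)) := by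
    rw [PresentedGroup.closure_range_of]; trivial
  refine Subgroup.closure_induction_left (p := fun x _ => x ∈ A) ?_ ?_ ?_ hg
  · simp [A]
  · rintro x ⟨i, rfl⟩ y _ hy
    fin_cases i
    · exact memA_s y hy
    · exact memA_t y hy
  · rintro x ⟨i, rfl⟩ y _ hy
    fin_cases i
    · show s⁻¹ * y ∈ A
      rw [sinv, mul_assoc]
      exact memA_s _ (memA_s _ hy)
    · show t⁻¹ * y ∈ A
      rw [tinv, mul_assoc]
      exact memA_t _ (memA_t _ hy)

lemma mem_self (g : G4) : g ∈ sConjClass g := ⟨0, by simp⟩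

lemma class_eq_of_mem {g h : G4} (hm : h ∈ sConjClass g) : sConjClass h = sConjClass g := by
  obtain ⟨n, rfl⟩ := hm
  ext x
  simp only [sConjClass, Set.mem_setOf_eq]
  constructor
  · rintro ⟨m, rfl⟩; exact ⟨m + n, by group⟩
  · rintro ⟨m, rfl⟩; exact ⟨m - n, by group⟩

lemma class_conj (g : G4) : sConjClass (s * (g * (s * s))) = sConjClass g :=
  class_eq_of_mem ⟨1, by rw [zpow_one, zpow_neg_one, sinv, mul_assoc]⟩

lemma st_stss : sConjClass (s * (t * (s * (s)))) = sConjClass (t) := by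
  rw [show (s * (t * (s * (s)))) = s * ((t) * (s * s)) by
    simp [R1, R1', R2, R2', R3, R3', R4, R4', R5, R5', R6, R6', mul_assoc]]
  exact class_conj (t)

lemma st_ssts : sConjClass (s * (s * (t * (s)))) = sConjClass (s * (t * (s * (s)))) := by
  rw [show (s * (s * (t * (s)))) = s * ((s * (t * (s * (s)))) * (s * s)) by
    simp [R1, R1', R2, R2', R3, R3', R4, R4', R5, R5', R6, R6', mul_assoc]]
  exact class_conj (s * (t * (s * (s))))

lemma st_sstss : sConjClass (s * (s * (t * (s * (s))))) = sConjClass (s * (t)) := by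
  rw [show (s * (s * (t * (s * (s))))) = s * ((s * (t)) * (s * s)) by
    simp [R1, R1', R2, R2', R3, R3', R4, R4', R5, R5', R6, R6', mul_assoc]]
  exact class_conj (s * (t))

lemma st_ts : sConjClass (t * (s)) = sConjClass (s * (s * (t * (s * (s))))) := by
  rw [show (t * (s)) = s * ((s * (s * (t * (s * (s))))) * (s * s)) by
    simp [R1, R1', R2, R2', R3, R3', R4, R4', R5, R5', R6, R6', mul_assoc]]
  exact class_conj (s * (s * (t * (s * (s)))))

lemma st_sttss : sConjClass (s * (t * (t * (s * (s))))) = sConjClass (t * (t)) := by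
  rw [show (s * (t * (t * (s * (s))))) = s * ((t * (t)) * (s * s)) by
    simp [R1, R1', R2, R2', R3, R3', R4, R4', R5, R5', R6, R6', mul_assoc]]
  exact class_conj (t * (t))

lemma st_sstts : sConjClass (s * (s * (t * (t * (s))))) = sConjClass (s * (t * (t * (s * (s))))) := by
  rw [show (s * (s * (t * (t * (s))))) = s * ((s * (t * (t * (s * (s))))) * (s * s)) by
    simp [R1, R1', R2, R2', R3, R3', R4, R4', R5, R5', R6, R6', mul_assoc]]
  exact class_conj (s * (t * (t * (s * (s)))))

lemma st_tss : sConjClass (t * (s * (s))) = sConjClass (s * (s * (t))) := by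
  rw [show (t * (s * (s))) = s * ((s * (s * (t))) * (s * s)) by
    simp [R1, R1', R2, R2', R3, R3', R4, R4', R5, R5', R6, R6', mul_assoc]]
  exact class_conj (s * (s * (t)))

lemma st_sts : sConjClass (s * (t * (s))) = sConjClass (t * (s * (s))) := by
  rw [show (s * (t * (s))) = s * ((t * (s * (s))) * (s * s)) by
    simp [R1, R1', R2, R2', R3, R3', R4, R4', R5, R5', R6, R6', mul_assoc]]
  exact class_conj (t * (s * (s)))

lemma st_ssttss : sConjClass (s * (s * (t * (t * (s * (s)))))) = sConjClass (s * (t * (t))) := by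
  rw [show (s * (s * (t * (t * (s * (s)))))) = s * ((s * (t * (t))) * (s * s)) by
    simp [R1, R1', R2, R2', R3, R3', R4, R4', R5, R5', R6, R6', mul_assoc]]
  exact class_conj (s * (t * (t)))

lemma st_tts : sConjClass (t * (t * (s))) = sConjClass (s * (s * (t * (t * (s * (s)))))) := by
  rw [show (t * (t * (s))) = s * ((s * (s * (t * (t * (s * (s)))))) * (s * s)) by
    simp [R1, R1', R2, R2', R3, R3', R4, R4', R5, R5', R6, R6', mul_assoc]]
  exact class_conj (s * (s * (t * (t * (s * (s))))))

lemma st_ttss : sConjClass (t * (t * (s * (s)))) = sConjClass (s * (s * (t * (t)))) := by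
  rw [show (t * (t * (s * (s)))) = s * ((s * (s * (t * (t)))) * (s * s)) by
    simp [R1, R1', R2, R2', R3, R3', R4, R4', R5, R5', R6, R6', mul_assoc]]
  exact class_conj (s * (s * (t * (t))))

lemma st_stts : sConjClass (s * (t * (t * (s)))) = sConjClass (t * (t * (s * (s)))) := by
  rw [show (s * (t * (t * (s)))) = s * ((t * (t * (s * (s)))) * (s * s)) by
    simp [R1, R1', R2, R2', R3, R3', R4, R4', R5, R5', R6, R6', mul_assoc]]
  exact class_conj (t * (t * (s * (s))))


def rep : Fin 12 → G4 := ![(1 : G4), s, t, s * (s), s * (t), t * (t), s * (s * (t)), s * (t * (t)), s * (s * (t * (t))), t * (s * (s * (t))), s * (t * (s * (s * (t)))), s * (s * (t * (s * (s * (t)))))]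

noncomputable def F : Fin 12 → Set G4 := fun i => sConjClass (rep i)


lemma class_set : {C : Set G4 | ∃ g : G4, C = sConjClass g} = Set.range F := by
  ext C
  simp only [Set.mem_setOf_eq, Set.mem_range]
  constructor
  · rintro ⟨g, rfl⟩
    have hg := cover g
    simp only [A, Set.mem_insert_iff, Set.mem_singleton_iff] at hg
    rcases hg with rfl|rfl|rfl|rfl|rfl|rfl|rfl|rfl|rfl|rfl|rfl|rfl|rfl|rfl|rfl|rfl|rfl|rfl|rfl|rfl|rfl|rfl|rfl|rfl
    exacts [⟨0, rfl⟩,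
      ⟨1, rfl⟩,
      ⟨2, rfl⟩,
      ⟨3, rfl⟩,
      ⟨4, rfl⟩,
      ⟨4, (st_ts.trans st_sstss).symm⟩,
      ⟨5, rfl⟩,
      ⟨6, rfl⟩,
      ⟨6, (st_sts.trans st_tss).symm⟩,
      ⟨7, rfl⟩,
      ⟨6, st_tss.symm⟩,
      ⟨7, (st_tts.trans st_ssttss).symm⟩,
      ⟨2, (st_ssts.trans st_stss).symm⟩,
      ⟨8, rfl⟩,
      ⟨2, st_stss.symm⟩,
      ⟨8, (st_stts.trans st_ttss).symm⟩,
      ⟨9, rfl⟩,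
      ⟨8, st_ttss.symm⟩,
      ⟨4, st_sstss.symm⟩,
      ⟨5, (st_sstts.trans st_sttss).symm⟩,
      ⟨10, rfl⟩,
      ⟨5, st_sttss.symm⟩,
      ⟨11, rfl⟩,
      ⟨7, st_ssttss.symm⟩]
  · rintro ⟨i, rfl⟩
    exact ⟨rep i, rfl⟩

abbrev SL := Matrix.SpecialLinearGroup (Fin 2) (ZMod 3)
instance : DecidableEq SL := fun a b => decidable_of_iff (a.1 = b.1) Subtype.ext_iff.symm

def S : SL := ⟨!![1,1;0,1], by decide⟩
def T : SL := ⟨!![1,0;2,1], by decide⟩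

lemma relsat : ∀ r ∈ G4rels, FreeGroup.lift (![S, T] : Fin 2 → SL) r = 1 := by
  intro r hr
  rcases hr with rfl | rfl | rfl <;>
    · simp only [map_pow, map_mul, map_inv, FreeGroup.lift_apply_of]
      decide

noncomputable def phi : G4 →* SL := PresentedGroup.toGroup relsat

lemma phiS : phi s = S := PresentedGroup.toGroup.of relsat
lemma phiT : phi t = T := PresentedGroup.toGroup.of relsat

def Mrep : Fin 12 → SL := ![⟨!![1,0;0,1], by decide⟩, ⟨!![1,1;0,1], by decide⟩, ⟨!![1,0;2,1], by decide⟩, ⟨!![1,2;0,1], by decide⟩, ⟨!![0,1;2,1], by decide⟩, ⟨!![1,0;1,1], by decide⟩, ⟨!![2,2;2,1], by decide⟩, ⟨!![2,1;1,1], by decide⟩, ⟨!![0,2;1,1], by decide⟩, ⟨!![2,2;0,2], by decide⟩, ⟨!![2,1;0,2], by decide⟩, ⟨!![2,0;0,2], by decide⟩]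


lemma hrep_0 : phi (1 : G4) = (⟨!![1,0;0,1], by decide⟩ : SL) := by rw [map_one]; exact Subtype.ext (by decide)
lemma hrep_1 : phi (s) = (⟨!![1,1;0,1], by decide⟩ : SL) := by
  simp only [map_mul, phiS, phiT]
  exact Subtype.ext (by decide)
lemma hrep_2 : phi (t) = (⟨!![1,0;2,1], by decide⟩ : SL) := by
  simp only [map_mul, phiS, phiT]
  exact Subtype.ext (by decide)
lemma hrep_3 : phi (s * (s)) = (⟨!![1,2;0,1], by decide⟩ : SL) := by
  simp only [map_mul, phiS, phiT]
  exact Subtype.ext (by decide)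
lemma hrep_4 : phi (s * (t)) = (⟨!![0,1;2,1], by decide⟩ : SL) := by
  simp only [map_mul, phiS, phiT]
  exact Subtype.ext (by decide)
lemma hrep_5 : phi (t * (t)) = (⟨!![1,0;1,1], by decide⟩ : SL) := by
  simp only [map_mul, phiS, phiT]
  exact Subtype.ext (by decide)
lemma hrep_6 : phi (s * (s * (t))) = (⟨!![2,2;2,1], by decide⟩ : SL) := by
  simp only [map_mul, phiS, phiT]
  exact Subtype.ext (by decide)
lemma hrep_7 : phi (s * (t * (t))) = (⟨!![2,1;1,1], by decide⟩ : SL) := by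
  simp only [map_mul, phiS, phiT]
  exact Subtype.ext (by decide)
lemma hrep_8 : phi (s * (s * (t * (t)))) = (⟨!![0,2;1,1], by decide⟩ : SL) := by
  simp only [map_mul, phiS, phiT]
  exact Subtype.ext (by decide)
lemma hrep_9 : phi (t * (s * (s * (t)))) = (⟨!![2,2;0,2], by decide⟩ : SL) := by
  simp only [map_mul, phiS, phiT]
  exact Subtype.ext (by decide)
lemma hrep_10 : phi (s * (t * (s * (s * (t))))) = (⟨!![2,1;0,2], by decide⟩ : SL) := by
  simp only [map_mul, phiS, phiT]
  exact Subtype.ext (by decide)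
lemma hrep_11 : phi (s * (s * (t * (s * (s * (t)))))) = (⟨!![2,0;0,2], by decide⟩ : SL) := by
  simp only [map_mul, phiS, phiT]
  exact Subtype.ext (by decide)

lemma hrep : ∀ i : Fin 12, phi (rep i) = Mrep i := by
  intro i
  fin_cases i
  exacts [hrep_0, hrep_1, hrep_2, hrep_3, hrep_4, hrep_5, hrep_6, hrep_7, hrep_8,
    hrep_9, hrep_10, hrep_11]

lemma spow (n : ℤ) : ∃ m : Fin 3, s ^ n = s ^ (m : ℕ) := by
  refine ⟨⟨(n % 3).toNat, by omega⟩, ?_⟩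
  have h1 : (((n % 3).toNat : ℕ) : ℤ) = n % 3 := Int.toNat_of_nonneg (by omega)
  have h3 : s ^ (3 : ℤ) = 1 := by
    rw [show (3 : ℤ) = ((3 : ℕ) : ℤ) from rfl, zpow_natCast, relS]
  calc s ^ n = s ^ (n % 3 + 3 * (n / 3)) := by rw [Int.emod_add_mul_ediv]
    _ = s ^ (n % 3) * (s ^ (3 : ℤ)) ^ (n / 3) := by rw [zpow_add, zpow_mul]
    _ = s ^ (n % 3) := by rw [h3, one_zpow, mul_one]
    _ = s ^ (((n % 3).toNat : ℕ) : ℤ) := by rw [h1]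
    _ = s ^ ((n % 3).toNat : ℕ) := zpow_natCast s _

lemma key : ∀ i j : Fin 12, ∀ m : Fin 3,
    Mrep i = S ^ (m : ℕ) * Mrep j * (S ^ (m : ℕ))⁻¹ → i = j := by decide

lemma Finj : Function.Injective F := by
  intro i j h
  have hm : rep i ∈ sConjClass (rep j) := by
    have := mem_self (rep i)
    rwa [show sConjClass (rep i) = F i from rfl, h] at this
  obtain ⟨n, he⟩ := hm
  obtain ⟨m, hsn⟩ := spow n
  rw [zpow_neg, hsn] at he
  have hphi : Mrep i = S ^ (m : ℕ) * Mrep j * (S ^ (m : ℕ))⁻¹ := by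
    rw [← hrep i, ← hrep j, he]
    simp [map_mul, map_inv, map_pow, phiS]
  exact key i j m hphi

end G4Aux

/-- G₄ has exactly 12 orbits under conjugation by the cyclic subgroup ⟨s⟩. -/
theorem twelve_sConjClasses :
    {C : Set G4 | ∃ g : G4, C = sConjClass g}.ncard = 12 := by
  rw [G4Aux.class_set, ← Set.image_univ,
    Set.ncard_image_of_injective _ G4Aux.Finj, Set.ncard_univ]
  simp
end

section
/- Let W be a group, s ∈ W an element of order m, and d ∈ W. Suppose ⟨s⟩d⟨s⟩ is an additive double coset, i.e., there is a length function l on W (minimal word length in a fixed generating set containing s) with l(s^i d s^j) = l(d) + i + j for all 0 ≤ i, j ≤ m−1. Then the m² elements s^i d s^j, 0 ≤ i, j ≤ m−1, are pairwise distinct, so the double coset ⟨s⟩d⟨s⟩ has exactly m² elements. -/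
/-- Core contradiction: if `s^k * d * s^(m-k) = d` with `0 < k < m`, additivity fails. -/
private lemma additive_core {W : Type*} [Group W] (s d : W) (m : ℕ) (hm : 0 < m)
    (l : W → ℕ)
    (hadd : ∀ i j : ℕ, i ≤ m - 1 → j ≤ m - 1 →
      l (s ^ i * d * s ^ j) = l d + i + j)
    (k : ℕ) (hk0 : 0 < k) (hkm : k < m)
    (heq : s ^ k * d * s ^ (m - k) = d) : False := by
  have h1 : l (s ^ k * d * s ^ (m - k)) = l d + k + (m - k) :=
    hadd k (m - k) (by omega) (by omega)
  rw [heq] at h1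
  omega

/-- If `⟨s⟩d⟨s⟩` is an additive double coset (for the word-length function `l`
coming from a generating set `S` containing `s`, where `s` has order `m`),
then the `m²` elements `sⁱ d sʲ` (`0 ≤ i, j ≤ m − 1`) are pairwise distinct,
so the double coset has exactly `m²` elements. -/
theorem additive_double_coset_card (W : Type*) [Group W]
    (S : Set W) (hgen : Subgroup.closure S = ⊤)
    (s : W) (hsS : s ∈ S) (m : ℕ) (hm : 0 < m) (hord : orderOf s = m)
    (d : W) (l : W → ℕ)
    (hl : ∀ g : W, l g =
      sInf {n : ℕ | ∃ w : List W, (∀ x ∈ w, x ∈ S) ∧ w.length = n ∧ w.prod = g})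
    (hadd : ∀ i j : ℕ, i ≤ m - 1 → j ≤ m - 1 →
      l (s ^ i * d * s ^ j) = l d + i + j) :
    (∀ i j i' j' : ℕ, i ≤ m - 1 → j ≤ m - 1 → i' ≤ m - 1 → j' ≤ m - 1 →
      s ^ i * d * s ^ j = s ^ i' * d * s ^ j' → i = i' ∧ j = j') ∧
    {x : W | ∃ i j : ℕ, i ≤ m - 1 ∧ j ≤ m - 1 ∧ x = s ^ i * d * s ^ j}.ncard = m ^ 2 := by
  classical
  have hsm : s ^ m = 1 := by rw [← hord]; exact pow_orderOf_eq_one s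
  -- key: if i < i' and the elements coincide, contradiction
  have key : ∀ i j i' j' : ℕ, i ≤ m - 1 → j ≤ m - 1 → i' ≤ m - 1 → j' ≤ m - 1 →
      i < i' → s ^ i * d * s ^ j = s ^ i' * d * s ^ j' → False := by
    intro i j i' j' hi hj hi' hj' hlt heq
    -- lengths equal ⇒ i + j = i' + j'
    have hsum : i + j = i' + j' := by
      have h1 := hadd i j hi hj
      have h2 := hadd i' j' hi' hj'
      rw [heq, h2] at h1
      omega
    obtain ⟨k, hk⟩ : ∃ k, i' = i + k := ⟨i' - i, by omega⟩
    have hk0 : 0 < k := by omega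
    have hkm : k < m := by omega
    have hjk : j' + k = j := by omega
    -- rewrite equality: s^i * s^k * d * s^j' = s^i * d * s^j' * s^k
    have h3 : s ^ i * (s ^ k * d * s ^ j') = s ^ i * (d * (s ^ j' * s ^ k)) := by
      calc s ^ i * (s ^ k * d * s ^ j')
          = s ^ (i + k) * d * s ^ j' := by rw [pow_add]; group
        _ = s ^ i' * d * s ^ j' := by rw [hk]
        _ = s ^ i * d * s ^ j := heq.symm
        _ = s ^ i * (d * (s ^ j' * s ^ k)) := by
            rw [← pow_add, hjk]; group
    have h4 : s ^ k * d * s ^ j' = d * (s ^ j' * s ^ k) := mul_left_cancel h3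
    -- multiply on the right by s^(m - k - j')
    have h5 : s ^ k * d * s ^ (m - k) = d := by
      have : s ^ k * d * s ^ j' * s ^ (m - k - j') =
          d * (s ^ j' * s ^ k) * s ^ (m - k - j') := by rw [h4]
      calc s ^ k * d * s ^ (m - k)
          = s ^ k * d * (s ^ j' * s ^ (m - k - j')) := by
            rw [← pow_add]; congr 2; omega
        _ = s ^ k * d * s ^ j' * s ^ (m - k - j') := by group
        _ = d * (s ^ j' * s ^ k) * s ^ (m - k - j') := this
        _ = d * s ^ (j' + k + (m - k - j')) := by rw [pow_add, pow_add]; group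
        _ = d * s ^ m := by congr 2; omega
        _ = d := by rw [hsm, mul_one]
    exact additive_core s d m hm l hadd k hk0 hkm h5
  have inj : ∀ i j i' j' : ℕ, i ≤ m - 1 → j ≤ m - 1 → i' ≤ m - 1 → j' ≤ m - 1 →
      s ^ i * d * s ^ j = s ^ i' * d * s ^ j' → i = i' ∧ j = j' := by
    intro i j i' j' hi hj hi' hj' heq
    have hii : i = i' := by
      rcases lt_trichotomy i i' with h | h | h
      · exact absurd (key i j i' j' hi hj hi' hj' h heq) id
      · exact h
      · exact absurd (key i' j' i j hi' hj' hi hj h heq.symm) id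
    subst hii
    have hsj : s ^ j = s ^ j' := mul_left_cancel heq
    have : j ≡ j' [MOD m] := by
      rw [← hord]; exact (pow_eq_pow_iff_modEq).mp hsj
    exact ⟨rfl, Nat.ModEq.eq_of_lt_of_lt this (by omega) (by omega)⟩
  refine ⟨inj, ?_⟩
  have hset : {x : W | ∃ i j : ℕ, i ≤ m - 1 ∧ j ≤ m - 1 ∧ x = s ^ i * d * s ^ j} =
      ↑((Finset.range m ×ˢ Finset.range m).image fun p => s ^ p.1 * d * s ^ p.2) := by
    ext x
    simp only [Set.mem_setOf_eq, Finset.coe_image, Set.mem_image, Finset.mem_coe,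
      Finset.mem_product, Finset.mem_range]
    constructor
    · rintro ⟨i, j, hi, hj, rfl⟩
      exact ⟨(i, j), ⟨by omega, by omega⟩, rfl⟩
    · rintro ⟨⟨i, j⟩, ⟨hi, hj⟩, rfl⟩
      exact ⟨i, j, by omega, by omega, rfl⟩
  rw [hset, Set.ncard_coe_finset, Finset.card_image_of_injOn, Finset.card_product,
    Finset.card_range, sq]
  rintro ⟨i, j⟩ hij ⟨i', j'⟩ hij' heq
  simp only [Finset.mem_coe, Finset.mem_product, Finset.mem_range] at hij hij'
  obtain ⟨h1, h2⟩ := inj i j i' j' (by omega) (by omega) (by omega) (by omega) heq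
  simp [h1, h2]
end

section
/- Let m ≥ 1, let R = ℤ[ξ₀, ξ₁, …, ξ_{m−1}] be a polynomial ring with ξ₀ = 1, and let A = R[x]/(x^m − ξ_{m−1}x^{m−1} − ⋯ − ξ₁x − 1). Then for each k ≥ 0, writing x^{m+k} = Σ_{i=0}^{m−1} a_i x^i with a_i ∈ R, each monomial ξ_{j₁}ξ_{j₂}⋯ξ_{j_p} occurring in a_i satisfies j₁ + j₂ + ⋯ + j_p ≡ i − k (mod m). In particular the coefficients a_0, …, a_{m−1} are pairwise distinct elements of R. -/
open MvPolynomial Polynomial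

namespace PowerRootAux

variable {n : ℕ}

/-- canonical coefficients of `root^(n+1+k)` in the power basis -/
noncomputable def c (ξ : Fin (n+1) → MvPolynomial (Fin n) ℤ) :
    ℕ → Fin (n+1) → MvPolynomial (Fin n) ℤ
  | 0 => ξ
  | (k+1) => fun i => Fin.cases (c ξ k (Fin.last n) * ξ 0)
      (fun j => c ξ k j.castSucc + c ξ k (Fin.last n) * ξ j.succ) i

@[simp] lemma c_zero (ξ : Fin (n+1) → MvPolynomial (Fin n) ℤ) (i : Fin (n+1)) :
    c ξ 0 i = ξ i := rfl

@[simp] lemma c_succ_zero (ξ : Fin (n+1) → MvPolynomial (Fin n) ℤ) (k : ℕ) :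
    c ξ (k+1) 0 = c ξ k (Fin.last n) * ξ 0 := rfl

@[simp] lemma c_succ_succ (ξ : Fin (n+1) → MvPolynomial (Fin n) ℤ) (k : ℕ) (j : Fin n) :
    c ξ (k+1) j.succ = c ξ k j.castSucc + c ξ k (Fin.last n) * ξ j.succ := by
  simp [c]


/-- weight of a monomial -/
def w (e : Fin n →₀ ℕ) : ℕ := e.sum fun j t => ((j : ℕ) + 1) * t

lemma w_add (a b : Fin n →₀ ℕ) : w (a + b) = w a + w b :=
  Finsupp.sum_add_index' (fun _ => by simp) (fun j a b => mul_add _ a b)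

section

variable (ξ : Fin (n+1) → MvPolynomial (Fin n) ℤ)
  (hξ0 : ξ 0 = 1) (hξ : ∀ j : Fin n, ξ j.succ = X j)

include hξ0 hξ in
lemma weight_xi (i : Fin (n+1)) : ∀ e ∈ (ξ i).support, (w e : ZMod (n+1)) = (i : ℕ) := by
  induction i using Fin.cases with
  | zero =>
    intro e he
    rw [hξ0] at he
    simp only [MvPolynomial.mem_support_iff, MvPolynomial.coeff_one, ne_eq, ite_eq_right_iff, not_forall] at he
    obtain ⟨rfl, -⟩ := he
    simp [w]
  | succ j =>
    intro e he
    rw [hξ j] at he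
    simp only [MvPolynomial.support_X, Finset.mem_singleton] at he
    subst he
    simp [w, Finsupp.sum_single_index]

include hξ0 hξ in
lemma weight_c : ∀ (k : ℕ) (i : Fin (n+1)), ∀ e ∈ (c ξ k i).support,
    (w e : ZMod (n+1)) = (i : ℕ) - k := by
  intro k
  induction k with
  | zero =>
    intro i e he
    simpa using weight_xi ξ hξ0 hξ i e he
  | succ k ih =>
    have hn : ((n : ℕ) : ZMod (n+1)) = -1 := by
      have h := ZMod.natCast_self (n+1)
      push_cast at h
      linear_combination h
    intro i
    induction i using Fin.cases with
    | zero =>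
      intro e he
      rw [c_succ_zero] at he
      classical
      obtain ⟨e1, he1, e2, he2, rfl⟩ := Finset.mem_add.1 (MvPolynomial.support_mul _ _ he)
      have h1 := ih (Fin.last n) e1 he1
      have h2 := weight_xi ξ hξ0 hξ 0 e2 he2
      rw [w_add]
      push_cast
      rw [h1, h2]
      simp [Fin.val_last, hn]
      ring
    | succ j =>
      intro e he
      rw [c_succ_succ] at he
      classical
      rcases Finset.mem_union.1 (MvPolynomial.support_add he) with h | h
      · have := ih j.castSucc e h
        rw [this]
        push_cast
        simp only [Fin.coe_castSucc, Fin.val_succ]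
        push_cast
        ring
      · obtain ⟨e1, he1, e2, he2, rfl⟩ := Finset.mem_add.1 (MvPolynomial.support_mul _ _ h)
        have h1 := ih (Fin.last n) e1 he1
        have h2 := weight_xi ξ hξ0 hξ j.succ e2 he2
        rw [w_add]
        push_cast
        rw [h1, h2]
        simp only [Fin.val_last, Fin.val_succ, hn]
        push_cast
        ring

include hξ0 hξ in
lemma c_pos : ∀ (k : ℕ) (i : Fin (n+1)),
    0 < eval (fun _ => (1 : ℤ)) (c ξ k i) := by
  have hev : ∀ i : Fin (n+1), eval (fun _ => (1:ℤ)) (ξ i) = 1 := by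
    intro i
    induction i using Fin.cases with
    | zero => rw [hξ0]; simp
    | succ j => rw [hξ j]; simp
  intro k
  induction k with
  | zero => intro i; simp [hev i]
  | succ k ih =>
    intro i
    induction i using Fin.cases with
    | zero => rw [c_succ_zero]; simp [hev]; exact ih _
    | succ j =>
      rw [c_succ_succ]
      simp only [map_add, map_mul, hev]
      have := ih j.castSucc
      have := ih (Fin.last n)
      positivity

include hξ0 hξ in
lemma c_ne_zero (k : ℕ) (i : Fin (n+1)) : c ξ k i ≠ 0 := by
  intro h
  have := c_pos ξ hξ0 hξ k i
  rw [h] at this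
  simp at this

end



variable {n : ℕ} (ξ : Fin (n+1) → MvPolynomial (Fin n) ℤ)
  (p : Polynomial (MvPolynomial (Fin n) ℤ))
  (hp : p = Polynomial.X ^ (n+1) -
      ∑ j : Fin (n+1), Polynomial.C (ξ j) * Polynomial.X ^ (j : ℕ))

include hp in
lemma p_monic : p.Monic := by
  subst hp
  apply Polynomial.monic_X_pow_sub
  apply lt_of_le_of_lt (Polynomial.degree_sum_le _ _)
  rw [Finset.sup_lt_iff (by exact_mod_cast WithBot.bot_lt_coe (n+1))]
  intro j _
  refine lt_of_le_of_lt (Polynomial.degree_C_mul_X_pow_le _ _) ?_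
  exact_mod_cast Nat.cast_lt.2 j.isLt

include hp in
lemma p_natDegree : p.natDegree = n + 1 := by
  subst hp
  rw [Polynomial.natDegree_sub_eq_left_of_natDegree_lt, Polynomial.natDegree_X_pow]
  rw [Polynomial.natDegree_X_pow]
  apply lt_of_le_of_lt (Polynomial.natDegree_sum_le _ _)
  rw [Finset.fold_max_lt]
  constructor
  · omega
  · intro j _
    exact lt_of_le_of_lt (Polynomial.natDegree_C_mul_X_pow_le _ _) j.isLt

include hp in
lemma root_pow_base :
    (AdjoinRoot.root p) ^ (n+1) =
      ∑ i : Fin (n+1), AdjoinRoot.of p (ξ i) * (AdjoinRoot.root p) ^ (i : ℕ) := by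
  have h := AdjoinRoot.eval₂_root p
  rw [hp] at h ⊢
  simp only [Polynomial.eval₂_sub, Polynomial.eval₂_pow, Polynomial.eval₂_X,
    Polynomial.eval₂_finset_sum, Polynomial.eval₂_mul, Polynomial.eval₂_C,
    sub_eq_zero] at h
  exact h

include hp in
lemma root_pow (k : ℕ) :
    (AdjoinRoot.root p) ^ (n + 1 + k) =
      ∑ i : Fin (n+1), AdjoinRoot.of p (c ξ k i) * (AdjoinRoot.root p) ^ (i : ℕ) := by
  induction k with
  | zero => simpa using root_pow_base ξ p hp
  | succ k ih =>
    have : (AdjoinRoot.root p) ^ (n + 1 + (k + 1)) =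
        (AdjoinRoot.root p) ^ (n + 1 + k) * AdjoinRoot.root p := by ring
    rw [this, ih, Finset.sum_mul]
    rw [Fin.sum_univ_castSucc (n := n)
      (f := fun i => AdjoinRoot.of p (c ξ k i) * (AdjoinRoot.root p) ^ (i : ℕ) * AdjoinRoot.root p)]
    rw [Fin.sum_univ_succ (n := n)
      (f := fun i => AdjoinRoot.of p (c ξ (k+1) i) * (AdjoinRoot.root p) ^ (i : ℕ))]
    simp only [Fin.val_last, Fin.coe_castSucc, Fin.val_succ, Fin.val_zero, pow_zero,
      c_succ_zero, c_succ_succ, map_add, map_mul]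
    have hr : (AdjoinRoot.of p) (c ξ k (Fin.last n)) * AdjoinRoot.root p ^ n * AdjoinRoot.root p
        = (AdjoinRoot.of p) (c ξ k (Fin.last n)) * AdjoinRoot.root p ^ (n+1) := by ring
    rw [hr, root_pow_base ξ p hp, Fin.sum_univ_succ (n := n)
      (f := fun i => AdjoinRoot.of p (ξ i) * (AdjoinRoot.root p) ^ (i : ℕ))]
    simp only [Fin.val_zero, pow_zero, Fin.val_succ]
    simp only [mul_add, add_mul, Finset.mul_sum, Finset.sum_add_distrib]
    simp only [mul_one, mul_assoc, ← pow_succ]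
    ring

include hp in
lemma coeff_unique (b b' : Fin (n+1) → MvPolynomial (Fin n) ℤ)
    (h : ∑ i : Fin (n+1), AdjoinRoot.of p (b i) * (AdjoinRoot.root p) ^ (i : ℕ) =
         ∑ i : Fin (n+1), AdjoinRoot.of p (b' i) * (AdjoinRoot.root p) ^ (i : ℕ)) :
    b = b' := by
  have hmon := p_monic ξ p hp
  have hdeg := p_natDegree ξ p hp
  set pb := AdjoinRoot.powerBasis' hmon with hpb
  have hdim : p.natDegree = n + 1 := hdeg
  let B := pb.basis.reindex (finCongr hdim)
  have hB : ∀ i : Fin (n+1), B i = (AdjoinRoot.root p) ^ (i : ℕ) := by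
    intro i
    simp only [B, Module.Basis.reindex_apply, pb.basis_eq_pow]
    rfl
  have key : ∀ b : Fin (n+1) → MvPolynomial (Fin n) ℤ,
      (∑ i : Fin (n+1), AdjoinRoot.of p (b i) * (AdjoinRoot.root p) ^ (i : ℕ)) =
      B.equivFun.symm b := by
    intro b
    rw [Module.Basis.equivFun_symm_apply]
    apply Finset.sum_congr rfl
    intro i _
    rw [hB i, Algebra.smul_def]
    rfl
  rw [key b, key b'] at h
  exact B.equivFun.symm.injective h

end PowerRootAux

/-- Let `R = ℤ[ξ₁, …, ξ_{m−1}]` (with convention `ξ₀ = 1`) and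
`A = R[x]/(x^m − ξ_{m−1}x^{m−1} − ⋯ − ξ₁x − 1)`.  Writing
`x^{m+k} = Σ_{i<m} aᵢ xⁱ` in `A`, every monomial `ξ_{j₁}⋯ξ_{j_p}` occurring in
`aᵢ` has index sum `j₁ + ⋯ + j_p ≡ i − k (mod m)`; in particular the
coefficients `a₀, …, a_{m−1}` are pairwise distinct. -/
theorem power_of_root_coeffs (m : ℕ) (hm : 1 ≤ m)
    (ξ : Fin m → MvPolynomial (Fin (m - 1)) ℤ)
    (hξ0 : ξ ⟨0, by omega⟩ = 1)
    (hξ : ∀ j : Fin (m - 1), ξ ⟨(j : ℕ) + 1, by omega⟩ = MvPolynomial.X j)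
    (p : Polynomial (MvPolynomial (Fin (m - 1)) ℤ))
    (hp : p = Polynomial.X ^ m -
      ∑ j : Fin m, Polynomial.C (ξ j) * Polynomial.X ^ (j : ℕ))
    (k : ℕ) (a : Fin m → MvPolynomial (Fin (m - 1)) ℤ)
    (ha : (AdjoinRoot.root p) ^ (m + k) =
      ∑ i : Fin m, AdjoinRoot.of p (a i) * (AdjoinRoot.root p) ^ (i : ℕ)) :
    (∀ i : Fin m, ∀ e ∈ (a i).support,
      (((e.sum fun j n => ((j : ℕ) + 1) * n : ℕ) : ZMod m)) =
        (i : ℕ) - (k : ZMod m)) ∧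
    Function.Injective a := by
  obtain ⟨n, rfl⟩ : ∃ n, m = n + 1 := ⟨m - 1, by omega⟩
  have hξ0' : ξ 0 = 1 := by
    rw [← hξ0]; congr 1
  have hξ' : ∀ j : Fin n, ξ j.succ = MvPolynomial.X j := fun j => hξ j
  have hak : a = PowerRootAux.c ξ k :=
    PowerRootAux.coeff_unique ξ p hp a _
      (ha.symm.trans (PowerRootAux.root_pow ξ p hp k))
  constructor
  · intro i e he
    rw [hak] at he
    exact PowerRootAux.weight_c ξ hξ0' hξ' k i e he
  · intro i i' h
    rw [hak] at h
    obtain ⟨e, he⟩ := Finset.nonempty_iff_ne_empty.2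
      (fun hemp => PowerRootAux.c_ne_zero ξ hξ0' hξ' k i
        (MvPolynomial.support_eq_empty.1 hemp))
    have he' : e ∈ (PowerRootAux.c ξ k i').support := h ▸ he
    have w1 := PowerRootAux.weight_c ξ hξ0' hξ' k i e he
    have w2 := PowerRootAux.weight_c ξ hξ0' hξ' k i' e he'
    have hii : ((i : ℕ) : ZMod (n+1)) = ((i' : ℕ) : ZMod (n+1)) := by
      have := w1.symm.trans w2
      exact sub_left_inj.1 this
    apply Fin.ext
    have := congrArg ZMod.val hii
    rwa [ZMod.val_cast_of_lt i.isLt, ZMod.val_cast_of_lt i'.isLt] at this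
end

section
/- In the group G_4 = ⟨s, t ∣ s³ = t³ = 1, sts = tst⟩, the minimal word length (over the generating set {s, t}, with only positive powers of generators allowed) of the central element ststst is 6. -/
def wordLengths (g : G4) : Set ℕ :=
  {n : ℕ | ∃ w : List G4, (∀ x ∈ w, x = s ∨ x = t) ∧ w.length = n ∧ w.prod = g}

-- concrete model: permutations of (ZMod 3)²
def A : Equiv.Perm (ZMod 3 × ZMod 3) :=
  ⟨fun v => (v.1 + v.2, v.2), fun v => (v.1 - v.2, v.2), by decide, by decide⟩

def B : Equiv.Perm (ZMod 3 × ZMod 3) :=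
  ⟨fun v => (v.1, v.2 - v.1), fun v => (v.1, v.2 + v.1), by decide, by decide⟩

def f2 : Fin 2 → Equiv.Perm (ZMod 3 × ZMod 3) := ![A, B]

lemma rels_hold : ∀ r ∈ G4rels, FreeGroup.lift f2 r = 1 := by
  intro r hr
  rcases hr with h | h | h <;> subst h <;>
    simp only [map_mul, map_pow, map_inv, FreeGroup.lift_apply_of, f2] <;> decide

def φ : G4 →* Equiv.Perm (ZMod 3 × ZMod 3) := PresentedGroup.toGroup rels_hold

lemma φs : φ s = A := PresentedGroup.toGroup.of rels_hold
lemma φt : φ t = B := PresentedGroup.toGroup.of rels_hold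

def g (b : Bool) : Equiv.Perm (ZMod 3 × ZMod 3) := if b then A else B

lemma key : ∀ n : Fin 6, ∀ v : Fin n.1 → Bool,
    (List.ofFn fun i => g (v i)).prod ≠ A * B * A * B * A * B := by decide

lemma noshort (l : List Bool) (h : l.length ≤ 5) :
    (l.map g).prod ≠ A * B * A * B * A * B := by
  have h6 : l.length < 6 := Nat.lt_succ_of_le h
  have := key ⟨l.length, h6⟩ l.get
  simpa [List.ofFn_getElem, ← List.map_ofFn] using this

lemma extract (w : List G4) (hw : ∀ x ∈ w, x = s ∨ x = t) :
    ∃ bl : List Bool, w = bl.map (fun b => if b then s else t) := by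
  induction w with
  | nil => exact ⟨[], rfl⟩
  | cons a w ih =>
    obtain ⟨bl, hbl⟩ := ih (fun x hx => hw x (List.mem_cons_of_mem a hx))
    rcases hw a List.mem_cons_self with h | h
    · exact ⟨true :: bl, by simp [h, hbl]⟩
    · exact ⟨false :: bl, by simp [h, hbl]⟩

/-- The minimal word length of the central element ststst in G₄ is 6. -/
theorem length_ststst : IsLeast (wordLengths (s * t * s * t * s * t)) 6 := by
  constructor
  · exact ⟨[s, t, s, t, s, t], by intro x hx; fin_cases hx <;> simp, rfl,
      by simp [mul_assoc]⟩
  · rintro n ⟨w, hw, hlen, hprod⟩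
    by_contra hn
    push_neg at hn
    obtain ⟨bl, rfl⟩ := extract w hw
    have hb : bl.length ≤ 5 := by
      have := hlen; simp only [List.length_map] at this; omega
    apply noshort bl hb
    have := congrArg φ hprod
    rw [map_list_prod] at this
    simp only [map_mul, φs, φt] at this
    rw [← this]
    congr 1
    rw [List.map_map]
    congr 1
    funext b
    cases b <;> simp [g, φs, φt]
end
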